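/- (Recall at the top, eq. (5b)) The RDC H_q maximizes recall among all RDCs with predicted positive rate exactly α: for every RDC H with E[H] = α, recall(H) ≤ recall(H_q), where recall(H) = E[H·1_A]/P[A]. -/

import Mathlib

/-!
Neyman–Pearson argument. Since `H_q = 1` where `η > q` and `H_q = 0` where `η < q`, every RDC
`H` satisfies `(H_q - H)(η - q) ≥ 0` pointwise. Integrating, `E[η H_q] - E[η H] ≥ q (E[H_q] - E[H])`,
and the right-hand side vanishes because the randomization on `{η = q}` makes `E[H_q] = α`.
Finally `E[H 1_A] = E[η H]` for every bounded `ℋ`-measurable `H`, since `η = P[A | ℋ]`.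
-/

open MeasureTheory Set

/-- A randomized decision classifier (RDC): an `ℋ`-measurable random variable
with values in the unit interval. -/
def IsRDC {Ω : Type*} (ℋ : MeasurableSpace Ω) (H : Ω → ℝ) : Prop :=
  Measurable[ℋ] H ∧ ∀ ω, H ω ∈ Set.Icc (0 : ℝ) 1

/-- The optimal RDC `H_q` obtained by thresholding the posterior probability `η` at `q`,
with randomization on the event `{η = q}` calibrated so that the predicted positive
rate equals `α`. -/
noncomputable def Hq {Ω : Type*} [MeasurableSpace Ω] (P : Measure Ω) (η : Ω → ℝ)
    (α q : ℝ) : Ω → ℝ := fun ω =>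
  if P {ω' | η ω' = q} = 0 then {ω' | η ω' > q}.indicator (fun _ => (1 : ℝ)) ω
  else {ω' | η ω' > q}.indicator (fun _ => (1 : ℝ)) ω +
    ((α - (P {ω' | η ω' > q}).toReal) / (P {ω' | η ω' = q}).toReal) *
      {ω' | η ω' = q}.indicator (fun _ => (1 : ℝ)) ω

/-- Expected misclassification cost `L_{a,b}(H) = a·E[(1−H)·1_A] + b·E[H·1_{Aᶜ}]`. -/
noncomputable def cost {Ω : Type*} [MeasurableSpace Ω] (P : Measure Ω) (A : Set Ω)
    (a b : ℝ) (H : Ω → ℝ) : ℝ :=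
  a * ∫ ω, (1 - H ω) * A.indicator (fun _ => (1 : ℝ)) ω ∂P +
    b * ∫ ω, H ω * Aᶜ.indicator (fun _ => (1 : ℝ)) ω ∂P

lemma threshold_sub_mul_nonneg {Ω : Type*} {η G H : Ω → ℝ} {q : ℝ}
    (hG_gt : ∀ ω, q < η ω → G ω = 1) (hG_lt : ∀ ω, η ω < q → G ω = 0)
    (hH : ∀ ω, H ω ∈ Icc (0 : ℝ) 1) (ω : Ω) :
    0 ≤ (G ω - H ω) * (η ω - q) := by
  rcases lt_trichotomy (η ω) q with h | h | h
  · rw [hG_lt ω h]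
    nlinarith [(hH ω).1]
  · simp [h]
  · rw [hG_gt ω h]
    exact mul_nonneg (by linarith [(hH ω).2]) (by linarith)

lemma integral_mul_le_of_threshold {Ω : Type*} [MeasurableSpace Ω] {P : Measure Ω}
    {η G H : Ω → ℝ} {q C : ℝ} (hη : AEStronglyMeasurable η P) (hηC : ∀ ω, |η ω| ≤ C)
    (hG : Integrable G P) (hHi : Integrable H P)
    (hG_gt : ∀ ω, q < η ω → G ω = 1) (hG_lt : ∀ ω, η ω < q → G ω = 0)
    (hH : ∀ ω, H ω ∈ Icc (0 : ℝ) 1) (hGH : ∫ ω, G ω ∂P = ∫ ω, H ω ∂P) :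
    ∫ ω, η ω * H ω ∂P ≤ ∫ ω, η ω * G ω ∂P := by
  have hηb : ∀ᵐ ω ∂P, ‖η ω‖ ≤ C := ae_of_all _ hηC
  have hmono : ∫ ω, q * (G ω - H ω) ∂P ≤ ∫ ω, η ω * (G ω - H ω) ∂P :=
    integral_mono ((hG.sub hHi).const_mul q) ((hG.sub hHi).bdd_mul hη hηb)
      fun ω => by nlinarith [threshold_sub_mul_nonneg hG_gt hG_lt hH ω]
  have hleft : ∫ ω, q * (G ω - H ω) ∂P = 0 := by
    rw [integral_const_mul, integral_sub hG hHi, hGH, sub_self, mul_zero]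
  have hright : ∫ ω, η ω * (G ω - H ω) ∂P = ∫ ω, η ω * G ω ∂P - ∫ ω, η ω * H ω ∂P := by
    simp_rw [mul_sub]
    exact integral_sub (hG.bdd_mul hη hηb) (hHi.bdd_mul hη hηb)
  linarith

lemma integrable_of_measurable_le_of_abs_le {Ω : Type*} {m m₀ : MeasurableSpace Ω}
    {P : Measure Ω} [IsFiniteMeasure P] (hm : m ≤ m₀) {f : Ω → ℝ} (hf : Measurable[m] f)
    (hfC : ∃ C, ∀ ω, |f ω| ≤ C) : Integrable f P := by
  obtain ⟨C, hC⟩ := hfC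
  exact .of_bound (hf.mono hm le_rfl).aestronglyMeasurable C (ae_of_all _ hC)

lemma measurable_Hq {Ω : Type*} {m : MeasurableSpace Ω} [MeasurableSpace Ω] (P : Measure Ω)
    {η : Ω → ℝ} (α q : ℝ) (hη : Measurable[m] η) : Measurable[m] (Hq P η α q) := by
  have hS : Measurable[m] ({ω | η ω > q}.indicator fun _ => (1 : ℝ)) :=
    measurable_const.indicator (measurableSet_lt measurable_const hη)
  have hT : Measurable[m] ({ω | η ω = q}.indicator fun _ => (1 : ℝ)) :=
    measurable_const.indicator (hη (measurableSet_singleton q))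
  unfold Hq
  split_ifs
  · exact hS
  · exact hS.add (hT.const_mul _)

section Hq

variable {Ω : Type*} [MeasurableSpace Ω] (P : Measure Ω) {η : Ω → ℝ} {α q : ℝ}

lemma Hq_of_gt {ω : Ω} (h : q < η ω) : Hq P η α q ω = 1 := by
  simp [Hq, h, h.ne']

lemma Hq_of_lt {ω : Ω} (h : η ω < q) : Hq P η α q ω = 0 := by
  simp [Hq, h.ne, h.not_gt]

lemma Hq_bounded : ∃ C, ∀ ω, |Hq P η α q ω| ≤ C := by
  refine ⟨1 + |(α - (P {ω | η ω > q}).toReal) / (P {ω | η ω = q}).toReal|, fun ω => ?_⟩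
  rcases lt_trichotomy (η ω) q with h | h | h
  · rw [Hq_of_lt P h, abs_zero]
    positivity
  · by_cases hT : P {ω | η ω = q} = 0 <;> simp [Hq, hT, h]
  · simp [Hq_of_gt P h]

lemma measureReal_gt_eq_of_quantile [IsProbabilityMeasure P] (hη : Measurable η)
    (hq₁ : (P {ω | η ω < q}).toReal ≤ 1 - α) (hq₂ : 1 - α ≤ (P {ω | η ω ≤ q}).toReal)
    (hT : P {ω | η ω = q} = 0) : P.real {ω | η ω > q} = α := by
  have hle : P.real {ω | η ω ≤ q} = P.real {ω | η ω < q} + P.real {ω | η ω = q} := by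
    have hunion : {ω | η ω ≤ q} = {ω | η ω < q} ∪ {ω | η ω = q} := by
      ext ω
      exact (le_iff_lt_or_eq : η ω ≤ q ↔ _)
    rw [hunion]
    exact measureReal_union (disjoint_left.2 fun ω (h₁ : η ω < q) (h₂ : η ω = q) => h₁.ne h₂)
      (hη (measurableSet_singleton q))
  have hgt : P.real {ω | η ω > q} = 1 - P.real {ω | η ω ≤ q} := by
    rw [← probReal_compl_eq_one_sub (measurableSet_le hη measurable_const)]
    congr 1
    ext ω
    simp
  rw [measureReal_def P {ω | η ω = q}, hT, ENNReal.toReal_zero] at hle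
  simp only [measureReal_def] at *
  linarith

lemma integral_Hq [IsProbabilityMeasure P] (hη : Measurable η)
    (hq₁ : (P {ω | η ω < q}).toReal ≤ 1 - α) (hq₂ : 1 - α ≤ (P {ω | η ω ≤ q}).toReal) :
    ∫ ω, Hq P η α q ω ∂P = α := by
  have hS : MeasurableSet {ω | η ω > q} := measurableSet_lt measurable_const hη
  have hT : MeasurableSet {ω | η ω = q} := hη (measurableSet_singleton q)
  by_cases hT0 : P {ω | η ω = q} = 0
  · simp only [Hq, hT0, if_true]
    rw [← measureReal_gt_eq_of_quantile P hη hq₁ hq₂ hT0]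
    exact integral_indicator_one hS
  · have hTne : P.real {ω | η ω = q} ≠ 0 := (measureReal_ne_zero_iff).2 hT0
    simp only [Hq, hT0, if_false]
    rw [integral_add ((integrable_const 1).indicator hS)
        (((integrable_const 1).indicator hT).const_mul _), integral_const_mul,
      integral_indicator_const 1 hS, integral_indicator_const 1 hT, smul_eq_mul, smul_eq_mul,
      mul_one, mul_one]
    simp only [measureReal_def] at hTne ⊢
    field_simp
    ring

end Hq

theorem Hq_max_recall_general
    {Ω : Type*} (ℋ : MeasurableSpace Ω) [𝒜 : MeasurableSpace Ω]
    (P : Measure Ω) [IsProbabilityMeasure P] (hℋ : ℋ ≤ 𝒜)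
    (A : Set Ω)
    (η : Ω → ℝ) (hηm : Measurable[ℋ] η) (hη01 : ∀ ω, η ω ∈ Set.Icc (0 : ℝ) 1)
    (hηcond : ∀ Z : Ω → ℝ, Measurable[ℋ] Z → (∃ C, ∀ ω, |Z ω| ≤ C) →
      ∫ ω, η ω * Z ω ∂P = ∫ ω, A.indicator (fun _ => (1 : ℝ)) ω * Z ω ∂P)
    (α : ℝ)
    (q : ℝ) (hq₁ : (P {ω | η ω < q}).toReal ≤ 1 - α)
    (hq₂ : 1 - α ≤ (P {ω | η ω ≤ q}).toReal)
 :
    ∀ H : Ω → ℝ, IsRDC ℋ H → ∫ ω, H ω ∂P = α →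
      (∫ ω, H ω * A.indicator (fun _ => (1 : ℝ)) ω ∂P) / (P A).toReal
        ≤ (∫ ω, Hq P η α q ω * A.indicator (fun _ => (1 : ℝ)) ω ∂P) / (P A).toReal := by
  rintro H ⟨hHm, hH01⟩ hHα
  have recall_eq (Z : Ω → ℝ) (hZ : Measurable[ℋ] Z) (hZC : ∃ C, ∀ ω, |Z ω| ≤ C) :
      ∫ ω, Z ω * A.indicator (fun _ => (1 : ℝ)) ω ∂P = ∫ ω, η ω * Z ω ∂P := by
    simp_rw [mul_comm (Z _)]
    exact (hηcond Z hZ hZC).symm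
  have hη : Measurable η := hηm.mono hℋ le_rfl
  have hHC : ∃ C, ∀ ω, |H ω| ≤ C := ⟨1, fun ω => (abs_of_nonneg (hH01 ω).1).trans_le (hH01 ω).2⟩
  have hHq := measurable_Hq P α q hηm
  rw [recall_eq H hHm hHC, recall_eq _ hHq (Hq_bounded P)]
  refine div_le_div_of_nonneg_right ?_ ENNReal.toReal_nonneg
  refine integral_mul_le_of_threshold (C := 1) hη.aestronglyMeasurable
    (fun ω => (abs_of_nonneg (hη01 ω).1).trans_le (hη01 ω).2)
    (integrable_of_measurable_le_of_abs_le hℋ hHq (Hq_bounded P))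
    (integrable_of_measurable_le_of_abs_le hℋ hHm hHC)
    (fun _ => Hq_of_gt P) (fun _ => Hq_of_lt P) hH01 ?_
  rw [integral_Hq P hη hq₁ hq₂, hHα]

/-- recall at the top. `H_q` maximizes recall
`E[H·1_A]/P[A]` among all RDCs with predicted positive rate exactly `α`. -/
theorem Hq_max_recall
    {Ω : Type*} (ℋ : MeasurableSpace Ω) [𝒜 : MeasurableSpace Ω]
    (P : Measure Ω) [IsProbabilityMeasure P] (hℋ : ℋ ≤ 𝒜)
    (A : Set Ω) (hA : MeasurableSet A) (hA0 : 0 < P A) (hA1 : P A < 1)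
    (hAH : ¬ MeasurableSet[ℋ] A)
    (η : Ω → ℝ) (hηm : Measurable[ℋ] η) (hη01 : ∀ ω, η ω ∈ Set.Icc (0 : ℝ) 1)
    (hηcond : ∀ Z : Ω → ℝ, Measurable[ℋ] Z → (∃ C, ∀ ω, |Z ω| ≤ C) →
      ∫ ω, η ω * Z ω ∂P = ∫ ω, A.indicator (fun _ => (1 : ℝ)) ω * Z ω ∂P)
    (α : ℝ) (hα : α ∈ Set.Ioo (0 : ℝ) 1)
    (q : ℝ) (hq₁ : (P {ω | η ω < q}).toReal ≤ 1 - α)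
    (hq₂ : 1 - α ≤ (P {ω | η ω ≤ q}).toReal)
 :
    ∀ H : Ω → ℝ, IsRDC ℋ H → ∫ ω, H ω ∂P = α →
      (∫ ω, H ω * A.indicator (fun _ => (1 : ℝ)) ω ∂P) / (P A).toReal
        ≤ (∫ ω, Hq P η α q ω * A.indicator (fun _ => (1 : ℝ)) ω ∂P) / (P A).toReal :=
  Hq_max_recall_general ℋ (𝒜 := 𝒜) P hℋ A η hηm hη01 hηcond α q hq₁ hq₂
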